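/- arXiv:1604.01621 — 3 statements merged into one kernel-verified Lean document; each statement's English description precedes it below -/
import Mathlib

section
/- Every MV-algebra M, with the partial operation a + b defined as a ⊕ b whenever a ≤ b*, is an effect algebra satisfying the Riesz Decomposition Property: if a₁ + a₂ = b₁ + b₂ then there exist c₁₁, c₁₂, c₂₁, c₂₂ with a₁ = c₁₁ + c₁₂, a₂ = c₂₁ + c₂₂, b₁ = c₁₁ + c₂₁, b₂ = c₁₂ + c₂₂. -/
structure EffectAlgebra (E : Type*) where
  add : E → E → Option E
  zero : E
  one : E
  comm : ∀ a b, add a b = add b a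
  assoc : ∀ a b c, (add a b).bind (fun d => add d c) = (add b c).bind (fun d => add a d)
  orth : ∀ a : E, ∃! b, add a b = some one
  pos_one : ∀ a b, add a one = some b → a = zero

namespace EffectAlgebra

variable {E : Type*}

/-- The induced order: `a ≤ b` iff `a + c = b` for some `c`. -/
def le (EA : EffectAlgebra E) (a b : E) : Prop := ∃ c, EA.add a c = some b

/-- The orthosupplement `a'`, the unique element with `a + a' = 1`. -/
noncomputable def orthosupp (EA : EffectAlgebra E) (a : E) : E :=
  Classical.choose (EA.orth a).exists

/-- `s` is the supremum of `S` with respect to the induced order. -/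
def IsSup (EA : EffectAlgebra E) (S : Set E) (s : E) : Prop :=
  (∀ x ∈ S, EA.le x s) ∧ ∀ b, (∀ x ∈ S, EA.le x b) → EA.le s b

/-- `s` is the infimum of `S` with respect to the induced order. -/
def IsInf (EA : EffectAlgebra E) (S : Set E) (s : E) : Prop :=
  (∀ x ∈ S, EA.le s x) ∧ ∀ b, (∀ x ∈ S, EA.le b x) → EA.le b s

/-- Every increasing sequence has a supremum. -/
def MonotoneSigmaComplete (EA : EffectAlgebra E) : Prop :=
  ∀ f : ℕ → E, (∀ n, EA.le (f n) (f (n + 1))) → ∃ s, EA.IsSup (Set.range f) s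

/-- A σ-lattice effect algebra: countable suprema and infima exist. -/
def SigmaLattice (EA : EffectAlgebra E) : Prop :=
  (∀ f : ℕ → E, ∃ s, EA.IsSup (Set.range f) s) ∧
  (∀ f : ℕ → E, ∃ s, EA.IsInf (Set.range f) s)

/-- A complete lattice effect algebra: arbitrary suprema and infima exist. -/
def CompleteEA (EA : EffectAlgebra E) : Prop :=
  (∀ S : Set E, ∃ s, EA.IsSup S s) ∧ (∀ S : Set E, ∃ s, EA.IsInf S s)

/-- A lattice effect algebra: binary suprema and infima exist. -/
def LatticeEA (EA : EffectAlgebra E) : Prop :=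
  (∀ a b : E, ∃ s, EA.IsSup {a, b} s) ∧ (∀ a b : E, ∃ s, EA.IsInf {a, b} s)

end EffectAlgebra

/-- Borel subsets of the real line. -/
abbrev BorelSet := {A : Set ℝ // MeasurableSet A}

def bIio (t : ℝ) : BorelSet := ⟨Set.Iio t, measurableSet_Iio⟩
def bIic (t : ℝ) : BorelSet := ⟨Set.Iic t, measurableSet_Iic⟩

/-- An observable on a (monotone σ-complete) effect algebra: a unital,
additive map on the Borel σ-algebra preserving suprema of increasing sequences. -/
structure Observable {E : Type*} (EA : EffectAlgebra E) where
  toFun : BorelSet → E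
  unital : toFun ⟨Set.univ, MeasurableSet.univ⟩ = EA.one
  additive : ∀ A B : BorelSet, Disjoint A.1 B.1 →
    EA.add (toFun A) (toFun B) = some (toFun ⟨A.1 ∪ B.1, A.2.union B.2⟩)
  sup_cont : ∀ f : ℕ → BorelSet, (∀ n, (f n).1 ⊆ (f (n + 1)).1) →
    EA.IsSup (Set.range fun n => toFun (f n))
      (toFun ⟨⋃ n, (f n).1, MeasurableSet.iUnion (fun n => (f n).2)⟩)

namespace Observable

variable {E : Type*} {EA : EffectAlgebra E}

/-- The Olson (spectral) order on observables. -/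
def OlsonLe (x y : Observable EA) : Prop :=
  ∀ t : ℝ, EA.le (y.toFun (bIio t)) (x.toFun (bIio t))

/-- An observable is bounded if `x(C) = 1` for some compact set `C`. -/
def Bounded (x : Observable EA) : Prop :=
  ∃ C : Set ℝ, ∃ hC : IsCompact C, x.toFun ⟨C, hC.measurableSet⟩ = EA.one

/-- `x` is the question observable `q_a` of the element `a`. -/
def IsQuestion (x : Observable EA) (a : E) : Prop :=
  ∀ t : ℝ, x.toFun (bIio t) =
    if t ≤ 0 then EA.zero else if t ≤ 1 then EA.orthosupp a else EA.one

/-- The spectrum of `x` lies in `[0,1]`. -/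
def SpectrumIn01 (x : Observable EA) : Prop :=
  x.toFun ⟨Set.Icc 0 1, measurableSet_Icc⟩ = EA.one

/-- `z` is the infimum of `S` in the Olson order on bounded observables. -/
def IsOlsonInf (S : Set (Observable EA)) (z : Observable EA) : Prop :=
  z.Bounded ∧ (∀ x ∈ S, z.OlsonLe x) ∧
    ∀ w : Observable EA, w.Bounded → (∀ x ∈ S, w.OlsonLe x) → w.OlsonLe z

/-- `z` is the supremum of `S` in the Olson order on bounded observables. -/
def IsOlsonSup (S : Set (Observable EA)) (z : Observable EA) : Prop :=
  z.Bounded ∧ (∀ x ∈ S, x.OlsonLe z) ∧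
    ∀ w : Observable EA, w.Bounded → (∀ x ∈ S, x.OlsonLe w) → z.OlsonLe w

end Observable

/-- A spectral resolution: monotone, with infimum 0, supremum 1, left continuous. -/
def SpectralResolution {E : Type*} (EA : EffectAlgebra E) (F : ℝ → E) : Prop :=
  (∀ t s : ℝ, t < s → EA.le (F t) (F s)) ∧
  EA.IsInf (Set.range F) EA.zero ∧
  EA.IsSup (Set.range F) EA.one ∧
  ∀ s : ℝ, EA.IsSup (F '' Set.Iio s) (F s)

/-- An MV-algebra `(M; ⊕, *, 0, 1)`. -/
structure MVAlgebra (M : Type*) where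
  oplus : M → M → M
  star : M → M
  zero : M
  one : M
  comm : ∀ a b, oplus a b = oplus b a
  assoc : ∀ a b c, oplus (oplus a b) c = oplus a (oplus b c)
  oplus_zero : ∀ a, oplus a zero = a
  oplus_one : ∀ a, oplus a one = one
  star_star : ∀ a, star (star a) = a
  oplus_star : ∀ a, oplus a (star a) = one
  star_zero : star zero = one
  lukasiewicz : ∀ a b, oplus (star (oplus (star a) b)) b = oplus (star (oplus a (star b))) a

open Classical in
/-- The partial addition of an MV-algebra: `a + b := a ⊕ b` defined whenever
`a ≤ b*` (i.e. `a* ⊕ b* = 1`). -/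
noncomputable def MVAlgebra.padd {M : Type*} (A : MVAlgebra M) (a b : M) : Option M :=
  if A.oplus (A.star a) (A.star b) = A.one then some (A.oplus a b) else none

namespace MVAlgebra

variable {M : Type*} (A : MVAlgebra M)

/-- The induced order of the MV-algebra. -/
def Le (a b : M) : Prop := A.oplus (A.star a) b = A.one

theorem zero_oplus (a : M) : A.oplus A.zero a = a := by
  rw [A.comm]; exact A.oplus_zero a

theorem one_star : A.star A.one = A.zero := by
  rw [← A.star_zero, A.star_star]

theorem one_oplus (a : M) : A.oplus A.one a = A.one := by
  rw [A.comm]; exact A.oplus_one a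

theorem star_oplus_self (a : M) : A.oplus (A.star a) a = A.one := by
  rw [A.comm]; exact A.oplus_star a

theorem le_refl (a : M) : A.Le a a := A.star_oplus_self a

theorem le_add (d a : M) : A.Le a (A.oplus d a) := by
  show A.oplus (A.star a) (A.oplus d a) = A.one
  rw [A.comm d a, ← A.assoc, A.star_oplus_self, A.one_oplus]

theorem le_add' (a d : M) : A.Le a (A.oplus a d) := by
  rw [A.comm a d]; exact A.le_add d a

theorem le_eq {a b : M} (h : A.Le a b) : A.oplus (A.star (A.oplus a (A.star b))) a = b := by
  have h' : A.oplus (A.star a) b = A.one := h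
  rw [← A.lukasiewicz a b, h', A.one_star, A.zero_oplus]

theorem le_exists {a b : M} (h : A.Le a b) : ∃ u, A.oplus u a = b :=
  ⟨_, A.le_eq h⟩

theorem le_trans {a b c : M} (h1 : A.Le a b) (h2 : A.Le b c) : A.Le a c := by
  obtain ⟨u, rfl⟩ := A.le_exists h1
  obtain ⟨v, rfl⟩ := A.le_exists h2
  rw [← A.assoc v u a]
  exact A.le_add _ _

theorem star_antitone {a b : M} (h : A.Le a b) : A.Le (A.star b) (A.star a) := by
  show A.oplus (A.star (A.star b)) (A.star a) = A.one
  rw [A.star_star, A.comm]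
  exact h

theorem le_antisymm {a b : M} (h1 : A.Le a b) (h2 : A.Le b a) : a = b := by
  have h1' : A.oplus (A.star a) b = A.one := h1
  have h2' : A.oplus (A.star b) a = A.one := h2
  have e := A.lukasiewicz a b
  rw [h1', A.one_star, A.zero_oplus, A.comm a (A.star b), h2', A.one_star,
    A.zero_oplus] at e
  exact e.symm

theorem oplus_monotone (c : M) {a b : M} (h : A.Le a b) :
    A.Le (A.oplus c a) (A.oplus c b) := by
  obtain ⟨u, rfl⟩ := A.le_exists h
  have e : A.oplus c (A.oplus u a) = A.oplus u (A.oplus c a) := by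
    rw [← A.assoc, A.comm c u, A.assoc]
  rw [e]
  exact A.le_add u _

theorem oplus_monotone' (c : M) {a b : M} (h : A.Le a b) :
    A.Le (A.oplus a c) (A.oplus b c) := by
  rw [A.comm a c, A.comm b c]
  exact A.oplus_monotone c h

theorem vee {a b : M} (h : A.Le b (A.star a)) :
    A.oplus b (A.star (A.oplus a b)) = A.star a := by
  have h' : A.oplus (A.star b) (A.star a) = A.one := h
  have e := A.lukasiewicz (A.star a) b
  rw [A.star_star, A.comm (A.star a) (A.star b), h', A.one_star, A.zero_oplus] at e
  rw [A.comm b (A.star (A.oplus a b))]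
  exact e

theorem perp_rot {a b c : M} (h1 : A.Le a (A.star b)) (h2 : A.Le (A.oplus a b) (A.star c)) :
    A.Le (A.oplus b c) (A.star a) := by
  have hb : A.Le b (A.star a) := by
    have := A.star_antitone h1; rwa [A.star_star] at this
  have hc : A.Le c (A.star (A.oplus a b)) := by
    have := A.star_antitone h2; rwa [A.star_star] at this
  have h4 := A.oplus_monotone b hc
  rwa [A.vee hb] at h4

/-- Truncated subtraction `x ⊖ y = (x* ⊕ y)*`. -/
def sub (x y : M) : M := A.star (A.oplus (A.star x) y)

theorem sub_le (x y : M) : A.Le (A.sub x y) x := by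
  show A.oplus (A.star (A.star (A.oplus (A.star x) y))) x = A.one
  rw [A.star_star, A.assoc, A.comm y x, ← A.assoc, A.star_oplus_self, A.one_oplus]

theorem sub_perp (x y : M) : A.Le (A.sub x y) (A.star y) := by
  show A.oplus (A.star (A.star (A.oplus (A.star x) y))) (A.star y) = A.one
  rw [A.star_star, A.assoc, A.oplus_star, A.oplus_one]

theorem sub_add {x y : M} (h : A.Le y x) : A.oplus (A.sub x y) y = x := by
  have h' : A.oplus (A.star y) x = A.one := h
  have e := A.lukasiewicz x y
  rw [A.comm x (A.star y), h', A.one_star, A.zero_oplus] at e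
  exact e

theorem sub_sub_le (x y : M) : A.Le (A.sub x (A.sub x y)) y := by
  show A.oplus (A.star (A.star (A.oplus (A.star x) (A.sub x y)))) y = A.one
  unfold sub
  rw [A.star_star, A.assoc, A.lukasiewicz x y,
    A.comm (A.star (A.oplus x (A.star y))) x, ← A.assoc, A.star_oplus_self, A.one_oplus]

theorem sub_mono {x y : M} (h : A.Le x y) (c : M) : A.Le (A.sub x c) (A.sub y c) :=
  A.star_antitone (A.oplus_monotone' c (A.star_antitone h))

theorem cancel {a b : M} (h : A.Le a (A.star b)) : A.sub (A.oplus a b) a = b := by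
  have e := A.le_eq h
  rw [A.star_star] at e
  show A.star (A.oplus (A.star (A.oplus a b)) a) = b
  rw [e, A.star_star]

theorem padd_defined {a b : M} (h : A.Le a (A.star b)) :
    A.padd a b = some (A.oplus a b) := by
  unfold MVAlgebra.padd
  rw [if_pos (show A.oplus (A.star a) (A.star b) = A.one from h)]

theorem padd_eq_some {a b c : M} (h : A.padd a b = some c) :
    A.Le a (A.star b) ∧ A.oplus a b = c := by
  by_cases hc : A.oplus (A.star a) (A.star b) = A.one
  · unfold MVAlgebra.padd at h
    rw [if_pos hc] at h
    exact ⟨hc, Option.some.inj h⟩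
  · unfold MVAlgebra.padd at h
    rw [if_neg hc] at h
    exact absurd h (by simp)

theorem padd_comm (a b : M) : A.padd a b = A.padd b a := by
  by_cases h : A.oplus (A.star a) (A.star b) = A.one
  · have h' : A.oplus (A.star b) (A.star a) = A.one := by
      rwa [A.comm] at h
    unfold MVAlgebra.padd
    rw [if_pos h, if_pos h', A.comm a b]
  · have h' : ¬ A.oplus (A.star b) (A.star a) = A.one := by
      rwa [A.comm] at h
    unfold MVAlgebra.padd
    rw [if_neg h, if_neg h']

theorem assoc_aux (a b c x : M)
    (h : (A.padd a b).bind (fun d => A.padd d c) = some x) :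
    (A.padd c b).bind (fun d => A.padd d a) = some x := by
  cases hab : A.padd a b with
  | none => rw [hab] at h; simp at h
  | some d =>
    rw [hab] at h
    simp only [Option.bind_some] at h
    obtain ⟨h1, rfl⟩ := A.padd_eq_some hab
    obtain ⟨h2, rfl⟩ := A.padd_eq_some h
    have hcb : A.Le c (A.star b) := by
      have hc' : A.Le c (A.star (A.oplus a b)) := by
        have := A.star_antitone h2; rwa [A.star_star] at this
      exact A.le_trans hc' (A.star_antitone (A.le_add a b))
    have hrot := A.perp_rot h1 h2
    have hcba : A.Le (A.oplus c b) (A.star a) := by rwa [A.comm b c] at hrot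
    rw [A.padd_defined hcb]
    simp only [Option.bind_some]
    rw [A.padd_defined hcba]
    congr 1
    rw [A.assoc c b a, A.comm (A.oplus a b) c, A.comm a b]

/-- The effect algebra structure on an MV-algebra. -/
noncomputable def toEA : EffectAlgebra M where
  add := A.padd
  zero := A.zero
  one := A.one
  comm := A.padd_comm
  assoc := by
    intro a b c
    have hr : (A.padd b c).bind (fun d => A.padd a d)
        = (A.padd c b).bind (fun d => A.padd d a) := by
      rw [A.padd_comm b c]
      cases A.padd c b with
      | none => rfl
      | some d => simp only [Option.bind_some]; exact A.padd_comm a d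
    rw [hr]
    cases hL : (A.padd a b).bind (fun d => A.padd d c) with
    | some x => exact (A.assoc_aux a b c x hL).symm
    | none =>
      cases hR : (A.padd c b).bind (fun d => A.padd d a) with
      | none => rfl
      | some y =>
        rw [A.assoc_aux c b a y hR] at hL
        exact absurd hL (by simp)
  orth := by
    intro a
    refine ⟨A.star a, ?_, ?_⟩
    · have h : A.Le a (A.star (A.star a)) := by
        rw [A.star_star]; exact A.le_refl a
      show A.padd a (A.star a) = some A.one
      rw [A.padd_defined h, A.oplus_star]
    · intro y hy
      obtain ⟨h1, h2⟩ := A.padd_eq_some hy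
      have hya : A.Le y (A.star a) := by
        have := A.star_antitone h1; rwa [A.star_star] at this
      have hay : A.Le (A.star a) y := by
        show A.oplus (A.star (A.star a)) y = A.one
        rw [A.star_star]; exact h2
      exact A.le_antisymm hya hay
  pos_one := by
    intro a b h
    obtain ⟨h1, _⟩ := A.padd_eq_some h
    have h1' : A.oplus (A.star a) (A.star A.one) = A.one := h1
    rw [A.one_star, A.oplus_zero] at h1'
    have := congrArg A.star h1'
    rwa [A.star_star, A.one_star] at this

theorem exch (p q r s : M) :
    A.oplus (A.oplus p q) (A.oplus r s) = A.oplus (A.oplus r p) (A.oplus s q) := by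
  rw [A.assoc, ← A.assoc q r s, A.comm q r, A.assoc r q s, A.comm q s,
    ← A.assoc p r (A.oplus s q), A.comm p r]

end MVAlgebra

/-- every MV-algebra with the partial addition is an effect algebra
satisfying the Riesz Decomposition Property. -/
theorem stmt3 {M : Type*} (A : MVAlgebra M) :
    (∃ EA : EffectAlgebra M,
      EA.zero = A.zero ∧ EA.one = A.one ∧ ∀ a b : M, EA.add a b = A.padd a b) ∧
    (∀ a₁ a₂ b₁ b₂ s : M, A.padd a₁ a₂ = some s → A.padd b₁ b₂ = some s →
      ∃ c₁₁ c₁₂ c₂₁ c₂₂ : M,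
        A.padd c₁₁ c₁₂ = some a₁ ∧ A.padd c₂₁ c₂₂ = some a₂ ∧
        A.padd c₁₁ c₂₁ = some b₁ ∧ A.padd c₁₂ c₂₂ = some b₂) := by
  constructor
  · exact ⟨A.toEA, rfl, rfl, fun a b => rfl⟩
  · intro a₁ a₂ b₁ b₂ s h_a h_b
    obtain ⟨ha, has⟩ := A.padd_eq_some h_a
    obtain ⟨hb, hbs⟩ := A.padd_eq_some h_b
    set c21 := A.sub b₁ a₁ with hc21def
    set c11 := A.sub b₁ c21 with hc11def
    set c12 := A.sub a₁ c11 with hc12def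
    set c22 := A.sub a₂ c21 with hc22def
    -- basic order facts
    have hc21_le_b1 : A.Le c21 b₁ := A.sub_le b₁ a₁
    have hb1_le_s : A.Le b₁ (A.oplus a₁ a₂) := by
      have h0 : A.Le b₁ (A.oplus b₁ b₂) := A.le_add' b₁ b₂
      rwa [hbs, ← has] at h0
    have hcancel : A.sub (A.oplus a₁ a₂) a₁ = a₂ := A.cancel ha
    have hc21_le_a2 : A.Le c21 a₂ := by
      have := A.sub_mono hb1_le_s a₁
      rwa [hcancel] at this
    have hc11_le_a1 : A.Le c11 a₁ := A.sub_sub_le b₁ a₁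
    -- the sums
    have eb1 : A.oplus c11 c21 = b₁ := A.sub_add hc21_le_b1
    have ea1 : A.oplus c12 c11 = a₁ := A.sub_add hc11_le_a1
    have ea2 : A.oplus c22 c21 = a₂ := A.sub_add hc21_le_a2
    refine ⟨c11, c12, c21, c22, ?_, ?_, ?_, ?_⟩
    · rw [A.padd_comm c11 c12, A.padd_defined (A.sub_perp a₁ c11), A.sub_add hc11_le_a1]
    · rw [A.padd_comm c21 c22, A.padd_defined (A.sub_perp a₂ c21), A.sub_add hc21_le_a2]
    · rw [A.padd_defined (A.sub_perp b₁ c21), A.sub_add hc21_le_b1]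
    · -- the hard leg: c12 + c22 = b₂
      have h1 : A.Le c12 a₁ := A.sub_le a₁ c11
      have h3 : A.Le (A.star a₂) (A.star c22) := A.star_antitone (A.sub_le a₂ c21)
      have hperp : A.Le c12 (A.star c22) := A.le_trans (A.le_trans h1 ha) h3
      rw [A.padd_defined hperp]
      -- total-sum rearrangement
      have hsum : A.oplus b₁ (A.oplus c12 c22) = A.oplus a₁ a₂ := by
        rw [← eb1, ← ea1, ← ea2]
        exact A.exch c11 c21 c12 c22
      -- Step A : c22 ⟂ b₁
      have hA2 : A.Le (A.oplus c22 c21) (A.star a₁) := by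
        rw [ea2]
        have := A.star_antitone ha; rwa [A.star_star] at this
      have hA3 := A.perp_rot (A.sub_perp a₂ c21) hA2
      have hA4 : A.Le b₁ (A.oplus c21 a₁) := by
        have := A.oplus_monotone c21 hc11_le_a1
        rwa [A.comm c21 c11, eb1] at this
      have h5 : A.Le b₁ (A.star c22) := A.le_trans hA4 hA3
      -- Step B : c12 ⟂ b₁ ⊕ c22
      have hB2 : A.Le (A.oplus c12 c11) (A.star a₂) := by rw [ea1]; exact ha
      have hB3 := A.perp_rot (A.sub_perp a₁ c11) hB2
      have hB4 : A.Le (A.oplus b₁ c22) (A.oplus c11 a₂) := by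
        have e : A.oplus b₁ c22 = A.oplus c11 (A.oplus c21 c22) := by
          rw [← eb1, A.assoc]
        rw [e]
        apply A.oplus_monotone
        rw [A.comm c21 c22, ea2]
        exact A.le_refl a₂
      have hB5 : A.Le (A.oplus b₁ c22) (A.star c12) := A.le_trans hB4 hB3
      -- Step C : b₁ ⟂ c12 ⊕ c22
      have hC := A.perp_rot h5 hB5
      have hC' : A.Le b₁ (A.star (A.oplus c12 c22)) := by
        have := A.star_antitone hC
        rwa [A.star_star, A.comm c22 c12] at this
      -- conclude by cancellation
      have hfin := A.cancel hC'
      rw [hsum, has, ← hbs, A.cancel hb] at hfin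
      rw [← hfin]
end

section
/- Let E be a monotone σ-complete effect algebra, {a_n} a finite or countable summable family of elements of E with Σ_n a_n = 1, and {t_n} a sequence of pairwise distinct reals. Then the map x : B(ℝ) → E defined by x(A) := Σ{a_n : t_n ∈ A} is an observable on E. -/
namespace Stmt6Aux

variable {E : Type*} (EA : EffectAlgebra E)

lemma assoc' {a b c d e : E} (h1 : EA.add a b = some d) (h2 : EA.add d c = some e) :
    ∃ f, EA.add b c = some f ∧ EA.add a f = some e := by
  have h := EA.assoc a b c
  rw [h1] at h
  cases hbc : EA.add b c with
  | none => rw [hbc] at h; simp [h2] at h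
  | some f =>
    rw [hbc] at h; simp only [Option.bind_some] at h
    exact ⟨f, rfl, by rw [← h, h2]⟩

lemma assoc'' {a b c g e : E} (h1 : EA.add b c = some g) (h2 : EA.add a g = some e) :
    ∃ d, EA.add a b = some d ∧ EA.add d c = some e := by
  have h := EA.assoc a b c
  rw [h1] at h; simp only [Option.bind_some] at h; rw [h2] at h
  cases hab : EA.add a b with
  | none => rw [hab] at h; simp at h
  | some d => rw [hab] at h; simp only [Option.bind_some] at h; exact ⟨d, rfl, h⟩

lemma orthosupp_spec (x : E) : EA.add x (EA.orthosupp x) = some EA.one :=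
  Classical.choose_spec (EA.orth x).exists

lemma orth_unique {x b : E} (h : EA.add x b = some EA.one) : b = EA.orthosupp x :=
  (EA.orth x).unique h (orthosupp_spec EA x)

lemma add_one_zero : EA.add EA.one EA.zero = some EA.one := by
  obtain ⟨b, hb, -⟩ := EA.orth EA.one
  have hz : b = EA.zero := EA.pos_one b EA.one (by rw [EA.comm]; exact hb)
  rwa [hz] at hb

lemma zero_add (x : E) : EA.add EA.zero x = some x := by
  have h1 := orthosupp_spec EA x
  have h0 : EA.add EA.zero EA.one = some EA.one := by rw [EA.comm]; exact add_one_zero EA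
  obtain ⟨d, hd, hd2⟩ := assoc'' EA h1 h0
  have hda : d = x := by
    have u1 : EA.add (EA.orthosupp x) d = some EA.one := by rw [EA.comm]; exact hd2
    have u2 : EA.add (EA.orthosupp x) x = some EA.one := by rw [EA.comm]; exact h1
    exact (EA.orth (EA.orthosupp x)).unique u1 u2
  rwa [hda] at hd

lemma add_zero (x : E) : EA.add x EA.zero = some x := by rw [EA.comm]; exact zero_add EA x

lemma le_refl (x : E) : EA.le x x := ⟨EA.zero, add_zero EA x⟩

lemma le_trans {x y z : E} (h1 : EA.le x y) (h2 : EA.le y z) : EA.le x z := by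
  obtain ⟨p, hp⟩ := h1; obtain ⟨q, hq⟩ := h2
  obtain ⟨f, -, hf⟩ := assoc' EA hp hq
  exact ⟨f, hf⟩

lemma le_of_add {x y z : E} (h : EA.add x y = some z) : EA.le x z := ⟨y, h⟩

lemma le_of_add' {x y z : E} (h : EA.add x y = some z) : EA.le y z :=
  ⟨x, by rw [EA.comm]; exact h⟩

lemma eq_zero_of_add_self {x e : E} (h : EA.add x e = some x) : e = EA.zero := by
  have h1 := orthosupp_spec EA x
  have h' : EA.add e x = some x := by rw [EA.comm]; exact h
  obtain ⟨f, hf, hf2⟩ := assoc' EA h' h1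
  have : f = EA.one := by rw [h1] at hf; exact Option.some.inj hf.symm
  rw [this] at hf2
  exact EA.pos_one e EA.one hf2

lemma le_antisymm {x y : E} (h1 : EA.le x y) (h2 : EA.le y x) : x = y := by
  obtain ⟨c, hc⟩ := h1; obtain ⟨d, hd⟩ := h2
  obtain ⟨f, hf, hf2⟩ := assoc' EA hc hd
  have hf0 : f = EA.zero := eq_zero_of_add_self EA hf2
  rw [hf0] at hf
  obtain ⟨g, hg, hg2⟩ := assoc' EA hf (zero_add EA EA.one)
  have hd0 : d = EA.zero := EA.pos_one d g hg
  rw [hd0, add_zero EA y] at hd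
  exact Option.some.inj hd.symm

lemma orth_orth (x : E) : EA.orthosupp (EA.orthosupp x) = x := by
  have := orthosupp_spec EA x
  exact (orth_unique EA (by rw [EA.comm]; exact this)).symm

lemma le_orth_of_add {x y c : E} (h : EA.add x y = some c) : EA.le x (EA.orthosupp y) := by
  have h' : EA.add y x = some c := by rw [EA.comm]; exact h
  obtain ⟨f, hf, hf2⟩ := assoc' EA h' (orthosupp_spec EA c)
  have : f = EA.orthosupp y := orth_unique EA hf2
  exact ⟨EA.orthosupp c, by rw [hf, this]⟩

lemma add_orth_of_le {x y : E} (h : EA.le x y) :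
    ∃ c, EA.add x (EA.orthosupp y) = some c := by
  obtain ⟨d, hd⟩ := h
  have hd' : EA.add d x = some y := by rw [EA.comm]; exact hd
  obtain ⟨f, hf, -⟩ := assoc' EA hd' (orthosupp_spec EA y)
  exact ⟨f, hf⟩

lemma le_of_add_orth {x y c : E} (h : EA.add x (EA.orthosupp y) = some c) : EA.le x y := by
  have := le_orth_of_add EA h
  rwa [orth_orth EA y] at this

lemma add_le_add {x y c d f : E} (h1 : EA.le x c) (h2 : EA.le y d)
    (hf : EA.add c d = some f) : ∃ e, EA.add x y = some e ∧ EA.le e f := by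
  obtain ⟨p, hp⟩ := h1; obtain ⟨q, hq⟩ := h2
  obtain ⟨g, hg, hg2⟩ := assoc' EA hp hf
  have hdg : EA.le d g := le_of_add' EA hg
  obtain ⟨r, hr⟩ := le_trans EA (le_of_add EA hq) hdg
  obtain ⟨e, he, he2⟩ := assoc'' EA hr hg2
  exact ⟨e, he, ⟨r, he2⟩⟩

lemma isSup_unique {S : Set E} {s s' : E} (h1 : EA.IsSup S s) (h2 : EA.IsSup S s') :
    s = s' :=
  le_antisymm EA (h1.2 s' h2.1) (h2.2 s h1.1)

lemma mono_le {f : ℕ → E} (hf : ∀ n, EA.le (f n) (f (n + 1))) {k m : ℕ} (h : k ≤ m) :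
    EA.le (f k) (f m) := by
  induction m, h using Nat.le_induction with
  | base => exact le_refl EA _
  | succ m hm ih => exact le_trans EA ih (hf m)

lemma add_of_sups {u v w : ℕ → E} {U V W : E}
    (hmu : ∀ n, EA.le (u n) (u (n + 1))) (hmv : ∀ n, EA.le (v n) (v (n + 1)))
    (hw : ∀ n, EA.add (u n) (v n) = some (w n))
    (hU : EA.IsSup (Set.range u) U) (hV : EA.IsSup (Set.range v) V)
    (hW : EA.IsSup (Set.range w) W) : EA.add U V = some W := by
  have hwW : ∀ k, EA.le (w k) W := fun k => hW.1 (w k) ⟨k, rfl⟩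
  have hUW : EA.le U W := hU.2 W (by rintro x ⟨k, rfl⟩; exact le_trans EA (le_of_add EA (hw k)) (hwW k))
  obtain ⟨n, hn⟩ := add_orth_of_le EA hUW
  -- claim1 : each u k ⊕ v j exists and is ≤ W
  have claim1 : ∀ k j, ∃ p, EA.add (u k) (v j) = some p ∧ EA.le p W := by
    intro k j
    obtain ⟨p, hp, hpw⟩ := add_le_add EA (mono_le EA hmu (Nat.le_max_left k j))
      (mono_le EA hmv (Nat.le_max_right k j)) (hw (max k j))
    exact ⟨p, hp, le_trans EA hpw (hwW _)⟩
  -- claim2 : v j ≤ (U ⊕ W')'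
  have claim2 : ∀ j, EA.le (v j) (EA.orthosupp n) := by
    intro j
    have hvjW : EA.le (v j) W := le_trans EA (le_of_add' EA (hw j)) (hwW j)
    obtain ⟨m, hm⟩ := add_orth_of_le EA hvjW
    have hub : ∀ x ∈ Set.range u, EA.le x (EA.orthosupp m) := by
      rintro x ⟨k, rfl⟩
      obtain ⟨p, hp, hpW⟩ := claim1 k j
      obtain ⟨q, hq⟩ := add_orth_of_le EA hpW
      obtain ⟨f, hf, hf2⟩ := assoc' EA hp hq
      have : f = m := by rw [hm] at hf; exact Option.some.inj hf.symm
      rw [this] at hf2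
      exact le_orth_of_add EA hf2
    have hUm : EA.le U (EA.orthosupp m) := hU.2 _ hub
    obtain ⟨c, hc⟩ := add_orth_of_le EA hUm
    rw [orth_orth EA m] at hc
    have hm' : EA.add (EA.orthosupp W) (v j) = some m := by rw [EA.comm]; exact hm
    obtain ⟨d, hd, hd2⟩ := assoc'' EA hm' hc
    have : d = n := by rw [hn] at hd; exact Option.some.inj hd.symm
    rw [this] at hd2
    exact le_orth_of_add EA (by rw [EA.comm]; exact hd2)
  have hVn : EA.le V (EA.orthosupp n) := hV.2 _ (by rintro x ⟨j, rfl⟩; exact claim2 j)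
  obtain ⟨s, hs⟩ := add_orth_of_le EA hVn
  rw [orth_orth EA n] at hs
  obtain ⟨Z, hZ, hZ2⟩ := assoc'' EA hn hs
  have hUV : EA.add U V = some Z := by rw [EA.comm]; exact hZ
  have hZW : EA.le Z W := le_of_add_orth EA hZ2
  have hWZ : EA.le W Z := by
    apply hW.2
    rintro x ⟨k, rfl⟩
    obtain ⟨e, he, he2⟩ := add_le_add EA (hU.1 (u k) ⟨k, rfl⟩) (hV.1 (v k) ⟨k, rfl⟩) hUV
    have : e = w k := by rw [hw k] at he; exact Option.some.inj he.symm
    rwa [this] at he2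
  rw [hUV, le_antisymm EA hZW hWZ]

end Stmt6Aux

namespace Stmt6Aux

open scoped Classical

variable {E : Type*} (EA : EffectAlgebra E)
variable (a : ℕ → E) (S : Finset ℕ → E)
variable (hSstep : ∀ (F : Finset ℕ) (n : ℕ), n ∉ F → EA.add (S F) (a n) = some (S (insert n F)))

include hSstep

lemma S_le_insert (F : Finset ℕ) (n : ℕ) : EA.le (S F) (S (insert n F)) := by
  by_cases h : n ∈ F
  · rw [Finset.insert_eq_self.2 h]; exact le_refl EA _
  · exact ⟨a n, hSstep F n h⟩

lemma S_union_le (F H : Finset ℕ) : EA.le (S F) (S (F ∪ H)) := by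
  induction H using Finset.induction_on with
  | empty => rw [Finset.union_empty]; exact le_refl EA _
  | @insert g H hg ih =>
    rw [Finset.union_insert]
    exact le_trans EA ih (S_le_insert EA a S hSstep _ g)

lemma S_mono {F G : Finset ℕ} (h : F ⊆ G) : EA.le (S F) (S G) := by
  have := S_union_le EA a S hSstep F G
  rwa [Finset.union_eq_right.2 h] at this

lemma S_add_disjoint (hS0 : S ∅ = EA.zero) (F G : Finset ℕ) (h : Disjoint F G) :
    EA.add (S F) (S G) = some (S (F ∪ G)) := by
  revert h
  induction G using Finset.induction_on with
  | empty => intro _; rw [hS0, Finset.union_empty]; exact add_zero EA _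
  | @insert g G hg ih =>
    intro h
    have hdis : Disjoint F G := h.mono_right (Finset.subset_insert g G)
    have hgF : g ∉ F := fun hgF => (Finset.disjoint_left.1 h hgF) (Finset.mem_insert_self g G)
    have ih' := ih hdis
    have h2 := hSstep (F ∪ G) g (by simp [hgF, hg])
    obtain ⟨f, hf, hf2⟩ := assoc' EA ih' h2
    have hfe : f = S (insert g G) := by
      rw [hSstep G g hg] at hf; exact Option.some.inj hf.symm
    rw [hfe] at hf2
    rw [Finset.union_insert]
    exact hf2

noncomputable def seq (p : ℕ → Prop) (k : ℕ) : E :=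
  S ((Finset.range k).filter p)

lemma seq_mono (p : ℕ → Prop) (k : ℕ) : EA.le (seq S p k) (seq S p (k + 1)) :=
  S_mono EA a S hSstep
    (Finset.filter_subset_filter p (Finset.range_subset_range.2 (Nat.le_succ k)))

variable (hE : EA.MonotoneSigmaComplete)

include hE

noncomputable def supFor (p : ℕ → Prop) : E :=
  (hE (seq S p) (seq_mono EA a S hSstep p)).choose

lemma supFor_spec (p : ℕ → Prop) :
    EA.IsSup (Set.range (seq S p)) (supFor EA a S hSstep hE p) :=
  (hE (seq S p) (seq_mono EA a S hSstep p)).choose_spec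

lemma supFor_isSup (p : ℕ → Prop) :
    EA.IsSup {e | ∃ F : Finset ℕ, (∀ n ∈ F, p n) ∧ e = S F} (supFor EA a S hSstep hE p) := by
  have hs := supFor_spec EA a S hSstep hE p
  constructor
  · rintro x ⟨F, hF, rfl⟩
    have hsub : F ⊆ (Finset.range (F.sup id + 1)).filter p := by
      intro n hn
      simp only [Finset.mem_filter, Finset.mem_range]
      exact ⟨Nat.lt_succ_of_le (Finset.le_sup (f := id) hn), hF n hn⟩
    exact le_trans EA (S_mono EA a S hSstep hsub) (hs.1 _ ⟨F.sup id + 1, rfl⟩)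
  · intro b hb
    apply hs.2
    rintro x ⟨k, rfl⟩
    exact hb _ ⟨(Finset.range k).filter p, fun n hn => (Finset.mem_filter.1 hn).2, rfl⟩

end Stmt6Aux


open scoped Classical

/-- if `{aₙ}` is a summable family (with partial sums `S F` over
finite sets `F`) whose sum is `1`, and `{tₙ}` are pairwise distinct reals, then
`A ↦ Σ{aₙ : tₙ ∈ A}` is an observable. -/
theorem stmt6 {E : Type*} (EA : EffectAlgebra E) (hE : EA.MonotoneSigmaComplete)
    (a : ℕ → E) (S : Finset ℕ → E)
    (hS0 : S ∅ = EA.zero)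
    (hSstep : ∀ (F : Finset ℕ) (n : ℕ), n ∉ F → EA.add (S F) (a n) = some (S (insert n F)))
    (hsum : EA.IsSup (Set.range S) EA.one)
    (t : ℕ → ℝ) (ht : Function.Injective t) :
    ∃ x : Observable EA, ∀ A : BorelSet,
      EA.IsSup {e | ∃ F : Finset ℕ, (∀ n ∈ F, t n ∈ A.1) ∧ e = S F} (x.toFun A) := by
  refine ⟨⟨fun A => Stmt6Aux.supFor EA a S hSstep hE (fun n => t n ∈ A.1), ?_, ?_, ?_⟩,
    fun A => Stmt6Aux.supFor_isSup EA a S hSstep hE (fun n => t n ∈ A.1)⟩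
  · -- unital
    have h1 := Stmt6Aux.supFor_isSup EA a S hSstep hE (fun n => t n ∈ (Set.univ : Set ℝ))
    have he : {e | ∃ F : Finset ℕ, (∀ n ∈ F, t n ∈ (Set.univ : Set ℝ)) ∧ e = S F}
        = Set.range S := by
      ext e
      simp [eq_comm, Set.mem_range]
    rw [he] at h1
    exact Stmt6Aux.isSup_unique EA h1 hsum
  · -- additive
    intro A B hAB
    have hw : ∀ k, EA.add (Stmt6Aux.seq S (fun n => t n ∈ A.1) k)
        (Stmt6Aux.seq S (fun n => t n ∈ B.1) k)
        = some (Stmt6Aux.seq S (fun n => t n ∈ A.1 ∪ B.1) k) := by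
      intro k
      have hdis : Disjoint ((Finset.range k).filter (fun n => t n ∈ A.1))
          ((Finset.range k).filter (fun n => t n ∈ B.1)) := by
        rw [Finset.disjoint_left]
        intro n hn hn'
        exact Set.disjoint_left.1 hAB (Finset.mem_filter.1 hn).2 (Finset.mem_filter.1 hn').2
      have hfe : ((Finset.range k).filter (fun n => t n ∈ A.1))
          ∪ ((Finset.range k).filter (fun n => t n ∈ B.1))
          = (Finset.range k).filter (fun n => t n ∈ A.1 ∪ B.1) := by
        ext n
        simp only [Finset.mem_union, Finset.mem_filter, Finset.mem_range, Set.mem_union]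
        tauto
      have := Stmt6Aux.S_add_disjoint EA a S hSstep hS0 _ _ hdis
      rw [hfe] at this
      simp only [Stmt6Aux.seq]
      convert this using 3 <;> exact Finset.filter_congr_decidable _ _ _
    exact Stmt6Aux.add_of_sups EA (Stmt6Aux.seq_mono EA a S hSstep _)
      (Stmt6Aux.seq_mono EA a S hSstep _) hw
      (Stmt6Aux.supFor_spec EA a S hSstep hE _)
      (Stmt6Aux.supFor_spec EA a S hSstep hE _)
      (Stmt6Aux.supFor_spec EA a S hSstep hE (fun n => t n ∈ A.1 ∪ B.1))
  · -- sup_cont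
    intro f hf
    have hmono : ∀ {k m : ℕ}, k ≤ m → (f k).1 ⊆ (f m).1 := by
      intro k m h
      induction m, h using Nat.le_induction with
      | base => exact subset_rfl
      | succ m hm ih => exact ih.trans (hf m)
    have hTn : ∀ n, EA.IsSup {e | ∃ F : Finset ℕ, (∀ m ∈ F, t m ∈ (f n).1) ∧ e = S F}
        (Stmt6Aux.supFor EA a S hSstep hE (fun m => t m ∈ (f n).1)) :=
      fun n => Stmt6Aux.supFor_isSup EA a S hSstep hE _
    have hTU := Stmt6Aux.supFor_isSup EA a S hSstep hE (fun m => t m ∈ ⋃ n, (f n).1)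
    constructor
    · rintro x ⟨n, rfl⟩
      apply (hTn n).2
      rintro e ⟨F, hF, rfl⟩
      exact hTU.1 _ ⟨F, fun m hm => Set.mem_iUnion.2 ⟨n, hF m hm⟩, rfl⟩
    · intro b hb
      apply hTU.2
      have key : ∀ F : Finset ℕ, (∀ m ∈ F, t m ∈ ⋃ n, (f n).1) →
          ∃ N, ∀ m ∈ F, t m ∈ (f N).1 := by
        intro F
        induction F using Finset.induction_on with
        | empty => exact fun _ => ⟨0, by simp⟩
        | @insert m F hm ih =>
          intro hF
          obtain ⟨N1, hN1⟩ := ih (fun x hx => hF x (Finset.mem_insert_of_mem hx))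
          obtain ⟨N2, hN2⟩ := Set.mem_iUnion.1 (hF m (Finset.mem_insert_self m F))
          refine ⟨max N1 N2, ?_⟩
          intro x hx
          rcases Finset.mem_insert.1 hx with rfl | hx
          · exact hmono (Nat.le_max_right N1 N2) hN2
          · exact hmono (Nat.le_max_left N1 N2) (hN1 x hx)
      rintro e ⟨F, hF, rfl⟩
      obtain ⟨N, hN⟩ := key F hF
      exact Stmt6Aux.le_trans EA ((hTn N).1 _ ⟨F, hN, rfl⟩) (hb _ ⟨N, rfl⟩)
end

section
/- The relation x ⪯ y defined by y((-∞,t)) ≤ x((-∞,t)) for all t ∈ ℝ is a partial order (the Olson order) on the set of all observables of a σ-lattice effect algebra E. -/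
/-!
Reflexivity and transitivity are those of the induced order `a ≤ b ↔ ∃ c, a + c = b` of an
effect algebra, which is moreover antisymmetric by cancellativity and positivity. So if `x ⪯ y ⪯ x`,
then `x` and `y` agree on every interval `(-∞, t)`. These intervals form a π-system generating the
Borel sets, and the sets on which two observables agree form a Dynkin system: it is closed under
complements because orthosupplements are unique, and under disjoint countable unions because
observables are additive on the partial unions and preserve their increasing supremum.
-/

namespace EffectAlgebra

variable {E : Type*} (EA : EffectAlgebra E)

theorem add_eq_bind_of_add_eq_some {a b c d : E} (h : EA.add a b = some d) :
    EA.add d c = (EA.add b c).bind (EA.add a) := by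
  simpa [h] using EA.assoc a b c

theorem one_add_zero : EA.add EA.one EA.zero = some EA.one := by
  obtain ⟨b, hb, -⟩ := EA.orth EA.one
  obtain rfl : b = EA.zero := EA.pos_one b EA.one (by rwa [EA.comm] at hb)
  exact hb

theorem zero_add (a : E) : EA.add EA.zero a = some a := by
  obtain ⟨a', ha', -⟩ := EA.orth a
  have h := EA.assoc EA.zero a a'
  rw [ha', Option.bind_some, EA.comm EA.zero EA.one, one_add_zero] at h
  obtain ⟨d, hd, hda'⟩ := Option.bind_eq_some_iff.mp h
  obtain rfl : d = a := (EA.orth a').unique (by rwa [EA.comm] at hda') (by rwa [EA.comm] at ha')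
  exact hd

theorem add_zero (a : E) : EA.add a EA.zero = some a := by
  rw [EA.comm, zero_add]

/-- Both `a` and `b` are the orthosupplement of `c + d'`, where `d'` is that of `d`. -/
theorem add_right_cancel {a b c d : E} (ha : EA.add a c = some d) (hb : EA.add b c = some d) :
    a = b := by
  obtain ⟨d', hd', -⟩ := EA.orth d
  have hac := EA.add_eq_bind_of_add_eq_some (c := d') ha
  have hbc := EA.add_eq_bind_of_add_eq_some (c := d') hb
  rw [hd'] at hac hbc
  obtain ⟨e, he, hae⟩ := Option.bind_eq_some_iff.mp hac.symm
  rw [he, Option.bind_some] at hbc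
  exact (EA.orth e).unique (by rwa [EA.comm] at hae) (by rw [EA.comm]; exact hbc.symm)

variable {EA}

theorem eq_zero_of_add_eq_zero {a b : E} (h : EA.add a b = some EA.zero) : a = EA.zero := by
  have h1 := EA.add_eq_bind_of_add_eq_some (c := EA.one) h
  rw [EA.comm, one_add_zero] at h1
  obtain ⟨f, hf, -⟩ := Option.bind_eq_some_iff.mp h1.symm
  obtain rfl : b = EA.zero := EA.pos_one b f hf
  exact EA.add_right_cancel h (EA.zero_add EA.zero)

theorem le.refl (a : E) : EA.le a a := ⟨EA.zero, EA.add_zero a⟩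

theorem le.trans {a b c : E} (hab : EA.le a b) (hbc : EA.le b c) : EA.le a c := by
  obtain ⟨u, hu⟩ := hab
  obtain ⟨v, hv⟩ := hbc
  have h := EA.add_eq_bind_of_add_eq_some (c := v) hu
  rw [hv] at h
  obtain ⟨e, -, hae⟩ := Option.bind_eq_some_iff.mp h.symm
  exact ⟨e, hae⟩

theorem le.antisymm {a b : E} (hab : EA.le a b) (hba : EA.le b a) : a = b := by
  obtain ⟨u, hu⟩ := hab
  obtain ⟨v, hv⟩ := hba
  have h := EA.add_eq_bind_of_add_eq_some (c := v) hu
  rw [hv] at h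
  obtain ⟨e, he, hae⟩ := Option.bind_eq_some_iff.mp h.symm
  obtain rfl : e = EA.zero := EA.add_right_cancel (by rwa [EA.comm] at hae) (EA.zero_add a)
  rw [eq_zero_of_add_eq_zero he, EA.add_zero] at hu
  exact Option.some.inj hu

theorem IsSup.unique {S : Set E} {s s' : E} (h : EA.IsSup S s) (h' : EA.IsSup S s') : s = s' :=
  (h.2 s' h'.1).antisymm (h'.2 s h.1)

end EffectAlgebra

theorem measurableSet_accumulate {α : Type*} [MeasurableSpace α] {f : ℕ → Set α}
    (hf : ∀ i, MeasurableSet (f i)) (n : ℕ) : MeasurableSet (Set.accumulate f n) :=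
  .iUnion fun i => .iUnion fun _ => hf i

namespace Observable

open Function Set

variable {E : Type*} {EA : EffectAlgebra E}

theorem ext {x y : Observable EA} (h : ∀ A, x.toFun A = y.toFun A) : x = y := by
  obtain ⟨f, _⟩ := x
  obtain ⟨g, _⟩ := y
  obtain rfl : f = g := funext h
  rfl

theorem toFun_empty (x : Observable EA) : x.toFun ⟨∅, .empty⟩ = EA.zero := by
  have h := x.additive ⟨∅, .empty⟩ ⟨∅, .empty⟩ (disjoint_empty _)
  simp only [union_self] at h
  exact EA.add_right_cancel h (EA.zero_add _)

theorem add_toFun_compl (x : Observable EA) (A : BorelSet) :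
    EA.add (x.toFun A) (x.toFun ⟨A.1ᶜ, A.2.compl⟩) = some EA.one := by
  rw [x.additive A ⟨A.1ᶜ, A.2.compl⟩ disjoint_compl_right, ← x.unital]
  simp only [union_compl_self]

variable {x y : Observable EA}

theorem toFun_compl_eq (A : BorelSet) (h : x.toFun A = y.toFun A) :
    x.toFun ⟨A.1ᶜ, A.2.compl⟩ = y.toFun ⟨A.1ᶜ, A.2.compl⟩ :=
  (EA.orth (y.toFun A)).unique (h ▸ x.add_toFun_compl A) (y.add_toFun_compl A)

theorem toFun_union_eq (A B : BorelSet) (hAB : Disjoint A.1 B.1)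
    (hA : x.toFun A = y.toFun A) (hB : x.toFun B = y.toFun B) :
    x.toFun ⟨A.1 ∪ B.1, A.2.union B.2⟩ = y.toFun ⟨A.1 ∪ B.1, A.2.union B.2⟩ := by
  have h := x.additive A B hAB
  rw [hA, hB, y.additive A B hAB] at h
  exact (Option.some.inj h).symm

theorem toFun_iUnion_eq_of_monotone (f : ℕ → BorelSet) (hf : ∀ n, (f n).1 ⊆ (f (n + 1)).1)
    (h : ∀ n, x.toFun (f n) = y.toFun (f n)) :
    x.toFun ⟨⋃ n, (f n).1, .iUnion fun n => (f n).2⟩ =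
      y.toFun ⟨⋃ n, (f n).1, .iUnion fun n => (f n).2⟩ := by
  have hx := x.sup_cont f hf
  simp only [h] at hx
  exact hx.unique (y.sup_cont f hf)

theorem toFun_iUnion_eq_of_pairwise_disjoint {f : ℕ → Set ℝ} (hdisj : Pairwise (Disjoint on f))
    (hf : ∀ i, MeasurableSet (f i)) (h : ∀ i, x.toFun ⟨f i, hf i⟩ = y.toFun ⟨f i, hf i⟩) :
    x.toFun ⟨⋃ i, f i, .iUnion hf⟩ = y.toFun ⟨⋃ i, f i, .iUnion hf⟩ := by
  let F : ℕ → BorelSet := fun n => ⟨accumulate f n, measurableSet_accumulate hf n⟩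
  have hF : ∀ n, x.toFun (F n) = y.toFun (F n) := by
    intro n
    induction n with
    | zero => simpa only [F, accumulate_zero_nat] using h 0
    | succ n ih =>
      simpa only [F, accumulate_succ] using toFun_union_eq (F n) ⟨_, hf (n + 1)⟩
        (disjoint_accumulate hdisj n.lt_succ_self) ih (h (n + 1))
  simpa only [F, iUnion_accumulate] using
    toFun_iUnion_eq_of_monotone F (fun n => monotone_accumulate n.le_succ) hF

theorem ext_of_isPiSystem {S : Set (Set ℝ)} (hgen : borel ℝ = MeasurableSpace.generateFrom S)
    (hS : IsPiSystem S) (h : ∀ A : BorelSet, A.1 ∈ S → x.toFun A = y.toFun A) : x = y := by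
  refine ext fun A => MeasurableSpace.induction_on_inter
    (C := fun A hA => x.toFun ⟨A, hA⟩ = y.toFun ⟨A, hA⟩)
    (BorelSpace.measurable_eq.trans hgen) hS ?_ (fun A hA => h _ hA) ?_ ?_ A.1 A.2
  · rw [toFun_empty, toFun_empty]
  · exact fun A hA => toFun_compl_eq ⟨A, hA⟩
  · exact fun f hdisj hf => toFun_iUnion_eq_of_pairwise_disjoint hdisj hf

theorem ext_of_Iio (h : ∀ t, x.toFun (bIio t) = y.toFun (bIio t)) : x = y :=
  ext_of_isPiSystem (borel_eq_generateFrom_Iio ℝ) isPiSystem_Iio fun _ ⟨t, ht⟩ => by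
    obtain rfl : _ = bIio t := Subtype.ext ht.symm
    exact h t

theorem OlsonLe.refl (x : Observable EA) : x.OlsonLe x := fun _ => EffectAlgebra.le.refl _

theorem OlsonLe.trans {z : Observable EA} (hxy : x.OlsonLe y) (hyz : y.OlsonLe z) :
    x.OlsonLe z :=
  fun t => (hyz t).trans (hxy t)

theorem OlsonLe.antisymm (hxy : x.OlsonLe y) (hyx : y.OlsonLe x) : x = y :=
  ext_of_Iio fun t => (hyx t).antisymm (hxy t)

end Observable

open Observable in
theorem stmt8_general {E : Type*} (EA : EffectAlgebra E) :
    (∀ x : Observable EA, x.OlsonLe x) ∧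
    (∀ x y z : Observable EA, x.OlsonLe y → y.OlsonLe z → x.OlsonLe z) ∧
    (∀ x y : Observable EA, x.OlsonLe y → y.OlsonLe x → x = y) :=
  ⟨OlsonLe.refl, fun _ _ _ => OlsonLe.trans, fun _ _ => OlsonLe.antisymm⟩

/-- the Olson relation `x ⪯ y ↔ ∀ t, y((-∞,t)) ≤ x((-∞,t))` is a
partial order on the set of all observables of a σ-lattice effect algebra. -/
theorem stmt8 {E : Type*} (EA : EffectAlgebra E) (hE : EA.SigmaLattice) :
    (∀ x : Observable EA, x.OlsonLe x) ∧
    (∀ x y z : Observable EA, x.OlsonLe y → y.OlsonLe z → x.OlsonLe z) ∧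
    (∀ x y : Observable EA, x.OlsonLe y → y.OlsonLe x → x = y) :=
  stmt8_general EA
end
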